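/- For positive integers s and k, let G be the graph on vertices v₁,…,v_{2sk+1} consisting of the path v₁v₂⋯v_{2sk+1} together with the chord edges v_{2(a−1)k+1}v_{2ak+1} for each a ∈ {1,…,s}. Then the difference index of G equals 2. -/
import Mathlib


open SimpleGraph

/-- The difference index of a finite simple graph: the minimum number of distinct values of
`|f u - f v|` over edges `uv`, over all injective labellings `f : V → ℤ`. -/
noncomputable def diffIndex {V : Type*} [Fintype V] (G : SimpleGraph V) : ℕ :=
  sInf {n | ∃ f : V → ℤ, Function.Injective f ∧
    {s : ℤ | ∃ u v, G.Adj u v ∧ s = |f u - f v|}.ncard = n}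

/-- The chain of `s` cycles of length `2k+1`, consisting of the path
`v₁ ⋯ v_{2sk+1}` (0-indexed: vertices `0, …, 2sk`) together with the chords
`v_{2(a-1)k+1} v_{2ak+1}` for `a ∈ {1,…,s}`, has difference index `2`. -/
theorem stmt3 (s k : ℕ) (hs : 1 ≤ s) (hk : 1 ≤ k) :
    diffIndex (SimpleGraph.fromRel (fun i j : Fin (2 * s * k + 1) =>
      ((j : ℕ) = (i : ℕ) + 1) ∨
      (∃ a ∈ Finset.Icc 1 s, (i : ℕ) = 2 * (a - 1) * k ∧ (j : ℕ) = 2 * a * k))) = 2 := by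
  have hsk : k ≤ s * k := Nat.le_mul_of_pos_left k hs
  have h2 : 2 * s * k = 2 * (s * k) := by ring
  set N := 2 * s * k + 1 with hNdef
  set G := SimpleGraph.fromRel (fun i j : Fin N =>
      ((j : ℕ) = (i : ℕ) + 1) ∨
      (∃ a ∈ Finset.Icc 1 s, (i : ℕ) = 2 * (a - 1) * k ∧ (j : ℕ) = 2 * a * k)) with hG
  -- vertex constructor
  have hNpos : 0 < N := by omega
  set vtx : ℕ → Fin N := fun i => ⟨min i (2 * s * k), by omega⟩ with hvtxdef
  have hvtx : ∀ i, i ≤ 2 * s * k → ((vtx i : Fin N) : ℕ) = i := by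
    intro i hi
    simp [hvtxdef, Nat.min_eq_left hi]
  -- path edges
  have hpath : ∀ i, i < 2 * s * k → G.Adj (vtx i) (vtx (i + 1)) := by
    intro i hi
    rw [hG, SimpleGraph.fromRel_adj]
    constructor
    · intro hEq
      have := congrArg Fin.val hEq
      rw [hvtx i (by omega), hvtx (i + 1) (by omega)] at this
      omega
    · left; left
      rw [hvtx i (by omega), hvtx (i + 1) (by omega)]
  -- chord edges
  have hchord : ∀ a, 1 ≤ a → a ≤ s → G.Adj (vtx (2 * (a - 1) * k)) (vtx (2 * a * k)) := by
    intro a ha1 has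
    have hlt : 2 * (a - 1) * k < 2 * a * k := by
      apply Nat.mul_lt_mul_of_lt_of_le (by omega) (le_refl k) (by omega)
    have hle : 2 * a * k ≤ 2 * s * k :=
      Nat.mul_le_mul (Nat.mul_le_mul_left 2 has) (le_refl k)
    rw [hG, SimpleGraph.fromRel_adj]
    constructor
    · intro hEq
      have := congrArg Fin.val hEq
      rw [hvtx _ (by omega), hvtx _ (by omega)] at this
      omega
    · left; right
      exact ⟨a, Finset.mem_Icc.mpr ⟨ha1, has⟩, hvtx _ (by omega), hvtx _ (by omega)⟩
  have hchord1 : G.Adj (vtx 0) (vtx (2 * k)) := by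
    have h := hchord 1 le_rfl hs
    rw [show 2 * (1 - 1) * k = 0 by norm_num, show 2 * 1 * k = 2 * k by ring] at h
    exact h
  -- membership: 2 is achieved
  have hmem2 : 2 ∈ {n | ∃ f : Fin N → ℤ, Function.Injective f ∧
      {t : ℤ | ∃ u v, G.Adj u v ∧ t = |f u - f v|}.ncard = n} := by
    refine ⟨fun i => ((i : ℕ) : ℤ), ?_, ?_⟩
    · intro a b h
      simp only at h
      exact Fin.ext (by exact_mod_cast h)
    · have hset : {t : ℤ | ∃ u v, G.Adj u v ∧ t = |((u : ℕ) : ℤ) - ((v : ℕ) : ℤ)|}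
          = {1, (2 * k : ℤ)} := by
        ext t
        simp only [Set.mem_setOf_eq, Set.mem_insert_iff, Set.mem_singleton_iff]
        constructor
        · rintro ⟨u, v, huv, rfl⟩
          rw [hG, SimpleGraph.fromRel_adj] at huv
          obtain ⟨hne, h | h⟩ := huv
          all_goals obtain h | ⟨a, ha, hi, hj⟩ := h
          · left
            have : ((v : ℕ) : ℤ) = ((u : ℕ) : ℤ) + 1 := by exact_mod_cast h
            rw [this]; simp
          · right
            obtain ⟨b, rfl⟩ : ∃ b, a = b + 1 := ⟨a - 1, by
              have := (Finset.mem_Icc.mp ha).1; omega⟩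
            simp only [Nat.add_sub_cancel] at hi
            have hj' : (v : ℕ) = (u : ℕ) + 2 * k := by rw [hi, hj]; ring
            have : ((v : ℕ) : ℤ) = ((u : ℕ) : ℤ) + 2 * k := by exact_mod_cast hj'
            rw [this]; ring_nf; simp [abs_of_nonneg]
          · left
            have : ((u : ℕ) : ℤ) = ((v : ℕ) : ℤ) + 1 := by exact_mod_cast h
            rw [this]; simp
          · right
            obtain ⟨b, rfl⟩ : ∃ b, a = b + 1 := ⟨a - 1, by
              have := (Finset.mem_Icc.mp ha).1; omega⟩
            simp only [Nat.add_sub_cancel] at hi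
            have hj' : (u : ℕ) = (v : ℕ) + 2 * k := by rw [hi, hj]; ring
            have : ((u : ℕ) : ℤ) = ((v : ℕ) : ℤ) + 2 * k := by exact_mod_cast hj'
            rw [this]; ring_nf; simp [abs_of_nonneg]
        · rintro (rfl | rfl)
          · exact ⟨vtx 0, vtx 1, hpath 0 (by omega),
              by rw [hvtx 0 (by omega), hvtx 1 (by omega)]; simp⟩
          · refine ⟨vtx 0, vtx (2 * k), hchord1, ?_⟩
            rw [hvtx 0 (by omega), hvtx (2 * k) (by omega)]
            push_cast
            rw [zero_sub, abs_neg, abs_of_nonneg (by positivity)]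
      rw [hset, Set.ncard_pair (by omega)]
  -- lower bound: for any injective labelling, the diff set has ncard ≥ 2
  have hlow : ∀ f : Fin N → ℤ, Function.Injective f →
      2 ≤ {t : ℤ | ∃ u v, G.Adj u v ∧ t = |f u - f v|}.ncard := by
    intro f hf
    set T := {t : ℤ | ∃ u v, G.Adj u v ∧ t = |f u - f v|} with hT
    have hTfin : T.Finite := by
      apply Set.Finite.subset (Set.finite_range fun p : Fin N × Fin N => |f p.1 - f p.2|)
      rintro t ⟨u, v, _, rfl⟩
      exact ⟨(u, v), rfl⟩
    have hTne : T.Nonempty := ⟨_, vtx 0, vtx 1, hpath 0 (by omega), rfl⟩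
    have hpos : 0 < T.ncard := (Set.ncard_pos hTfin).mpr hTne
    -- ncard ≠ 1 by parity
    have hne1 : T.ncard ≠ 1 := by
      intro h1
      obtain ⟨d, hd⟩ := Set.ncard_eq_one.mp h1
      have hedge : ∀ u v, G.Adj u v → |f u - f v| = d := by
        intro u v huv
        have : |f u - f v| ∈ T := ⟨u, v, huv, rfl⟩
        rw [hd] at this; exact this
      have hd1 : 1 ≤ d := by
        have : d ∈ T := by rw [hd]; rfl
        obtain ⟨u, v, huv, rfl⟩ := this
        have hne := huv.ne
        have : f u ≠ f v := fun h => hne (hf h)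
        have : f u - f v ≠ 0 := sub_ne_zero_of_ne this
        have := abs_pos.mpr this
        omega
      have key : ∀ i ≤ 2 * k, (2 * d) ∣ (f (vtx i) - f (vtx 0) - i * d) := by
        intro i
        induction i with
        | zero => intro _; simp
        | succ n ih =>
          intro hn
          have ihn := ih (by omega)
          have hstep : |f (vtx (n + 1)) - f (vtx n)| = d := by
            have := hedge _ _ (hpath n (by omega))
            rw [abs_sub_comm] at this
            exact this
          have hcases : f (vtx (n + 1)) - f (vtx n) = d ∨ f (vtx (n + 1)) - f (vtx n) = -d :=
            abs_eq (by omega) |>.mp hstep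
          have heq : f (vtx (n + 1)) - f (vtx 0) - (n + 1 : ℕ) * d =
              (f (vtx n) - f (vtx 0) - n * d) + (f (vtx (n + 1)) - f (vtx n) - d) := by
            push_cast; ring
          rw [heq]
          refine dvd_add ihn ?_
          rcases hcases with h | h
          · rw [h]; simp
          · rw [h]; exact ⟨-1, by ring⟩
      have hkey := key (2 * k) le_rfl
      have hch : |f (vtx 0) - f (vtx (2 * k))| = d := hedge _ _ hchord1
      have hch' : f (vtx (2 * k)) - f (vtx 0) = d ∨ f (vtx (2 * k)) - f (vtx 0) = -d := by
        rw [abs_sub_comm] at hch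
        exact abs_eq (by omega) |>.mp hch
      have hdvd2 : (2 * d) ∣ ((2 * k : ℕ) * d) := ⟨k, by push_cast; ring⟩
      have hdvd : (2 * d) ∣ (f (vtx (2 * k)) - f (vtx 0)) := by
        have := dvd_add hkey hdvd2
        simpa using this
      rcases hch' with h | h
      · rw [h] at hdvd
        have := Int.le_of_dvd (by omega) hdvd
        omega
      · rw [h] at hdvd
        rw [dvd_neg] at hdvd
        have := Int.le_of_dvd (by omega) hdvd
        omega
    omega
  unfold diffIndex
  have hSne : Set.Nonempty {n | ∃ f : Fin N → ℤ, Function.Injective f ∧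
      {t : ℤ | ∃ u v, G.Adj u v ∧ t = |f u - f v|}.ncard = n} := ⟨2, hmem2⟩
  have hle : sInf {n | ∃ f : Fin N → ℤ, Function.Injective f ∧
      {t : ℤ | ∃ u v, G.Adj u v ∧ t = |f u - f v|}.ncard = n} ≤ 2 := Nat.sInf_le hmem2
  obtain ⟨f, hf, hcard⟩ := Nat.sInf_mem hSne
  have h2le := hlow f hf
  exact le_antisymm hle (hcard ▸ h2le)
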